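/- If a burst of length M (b = 1) starts exactly at the boundary of spatial position z₀ (s integer) and there is no further channel noise (ε = 0), then the density evolution recursion reduces on the erased position to the single-variable recursion x^{(t+1)} = (1 − (1 − x^{(t)}/w)^{d_c−1})^{d_v−1}, which is exactly the density evolution recursion of the uncoupled (d_v,d_c) LDPC ensemble over a BEC with erasure probability 1/w evaluated at scaled variable; consequently, if 1/w > ε_BP(d_v,d_c) (the BP threshold of the (d_v,d_c) ensemble), the recursion started at x^{(0)} = 1 does not converge to 0. -/
import Mathlib


/-- if a burst of length `M` (`b = 1`) exactly erases spatial
position `z₀` and there is no further noise (`ε = 0`), the coupled density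
evolution recursion reduces on the erased position to
`x^{(t+1)} = (1 - (1 - x^{(t)}/w)^{dc-1})^{dv-1}`.  Setting `y^{(t)} = x^{(t)}/w`
gives the density evolution recursion of the uncoupled `(dv,dc)` LDPC ensemble
on a BEC with erasure probability `1/w`; consequently, if `1/w` exceeds the BP
threshold `ε_BP(dv,dc)` of the uncoupled ensemble, the recursion started at
`x^{(0)} = 1` does not converge to `0`. -/
theorem stmt8 (dv dc w : ℕ) (hdv : 2 ≤ dv) (hdc : 2 ≤ dc) (hw : 1 ≤ w)
    (x : ℕ → ℝ) (hx0 : x 0 = 1)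
    (hx : ∀ t, x (t + 1) = (1 - (1 - x t / (w : ℝ)) ^ (dc - 1)) ^ (dv - 1))
    (y : ℕ → ℝ) (hy : ∀ t, y t = x t / (w : ℝ))
    (εBP : ℝ)
    (hεBP : εBP = sSup {ε : ℝ | 0 ≤ ε ∧ ε ≤ 1 ∧
      Filter.Tendsto
        (fun t => (fun z : ℝ => ε * (1 - (1 - z) ^ (dc - 1)) ^ (dv - 1))^[t] 1)
        Filter.atTop (nhds 0)}) :
    (∀ t, y (t + 1) = (1 / (w : ℝ)) * (1 - (1 - y t) ^ (dc - 1)) ^ (dv - 1)) ∧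
    (εBP < 1 / (w : ℝ) → ¬ Filter.Tendsto x Filter.atTop (nhds 0)) := by
  have hw' : (0:ℝ) < (w:ℝ) := by exact_mod_cast hw
  have hpart1 : ∀ t, y (t + 1) = (1 / (w : ℝ)) * (1 - (1 - y t) ^ (dc - 1)) ^ (dv - 1) := by
    intro t
    rw [hy, hy, hx]
    ring
  refine ⟨hpart1, ?_⟩
  intro hlt hconv
  set f : ℝ → ℝ := fun z : ℝ => (1 / (w:ℝ)) * (1 - (1 - z) ^ (dc - 1)) ^ (dv - 1) with hf
  have hiter : ∀ t, f^[t+1] 1 = y t := by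
    intro t
    induction t with
    | zero =>
      have : f 1 = 1 / (w:ℝ) := by
        simp [hf, zero_pow (by omega : dc - 1 ≠ 0)]
      simpa [hy, hx0] using this
    | succ n ih =>
      rw [Function.iterate_succ_apply', ih, hpart1 n]
  have hyto : Filter.Tendsto y Filter.atTop (nhds 0) := by
    have hfun : y = fun t => x t / (w:ℝ) := funext hy
    have := hconv.div_const (w:ℝ)
    rw [hfun]
    simpa using this
  have hiterto : Filter.Tendsto
      (fun t => (fun z : ℝ => (1/(w:ℝ)) * (1 - (1 - z) ^ (dc - 1)) ^ (dv - 1))^[t] 1)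
      Filter.atTop (nhds 0) := by
    rw [show (fun z : ℝ => (1/(w:ℝ)) * (1 - (1 - z) ^ (dc - 1)) ^ (dv - 1)) = f from rfl]
    rw [← Filter.tendsto_add_atTop_iff_nat 1]
    have : (fun t => f^[t + 1] 1) = y := funext hiter
    rw [this]
    exact hyto
  have hmem : (1/(w:ℝ)) ∈ {ε : ℝ | 0 ≤ ε ∧ ε ≤ 1 ∧
      Filter.Tendsto
        (fun t => (fun z : ℝ => ε * (1 - (1 - z) ^ (dc - 1)) ^ (dv - 1))^[t] 1)
        Filter.atTop (nhds 0)} := by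
    refine ⟨by positivity, ?_, hiterto⟩
    rw [div_le_one hw']
    exact_mod_cast hw
  have hbdd : BddAbove {ε : ℝ | 0 ≤ ε ∧ ε ≤ 1 ∧
      Filter.Tendsto
        (fun t => (fun z : ℝ => ε * (1 - (1 - z) ^ (dc - 1)) ^ (dv - 1))^[t] 1)
        Filter.atTop (nhds 0)} :=
    BddAbove.mono (fun ε hε => hε.2.1) bddAbove_Iic
  have hle : 1/(w:ℝ) ≤ εBP := hεBP ▸ le_csSup hbdd hmem
  linarith
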